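/- A function f : S^{2×2} → ℝ is symmetric polyaffine (i.e., both f and −f are symmetric polyconvex) if and only if f is affine, i.e., there exist B ∈ S^{2×2} and b ∈ ℝ such that f(ε) = B:ε + b for all ε ∈ S^{2×2}. -/

import Mathlib

open Matrix

/-- The symmetric part `(F + Fᵀ)/2` of a 2×2 matrix. -/
noncomputable def symPart (F : Matrix (Fin 2) (Fin 2) ℝ) : Matrix (Fin 2) (Fin 2) ℝ :=
  (1 / 2 : ℝ) • (F + Fᵀ)

/-- Frobenius inner product `A:B = Σ_{i,j} A_{ij} B_{ij}` of 2×2 matrices. -/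
def mdot2 (A B : Matrix (Fin 2) (Fin 2) ℝ) : ℝ := ∑ i, ∑ j, A i j * B i j

/-- A function `W : ℝ^{2×2} → ℝ` is polyconvex if there is a convex function
`G : ℝ^{2×2} × ℝ → ℝ` with `W F = G (F, det F)` for all `F`. -/
def Polyconvex2 (W : Matrix (Fin 2) (Fin 2) ℝ → ℝ) : Prop :=
  ∃ G : Matrix (Fin 2) (Fin 2) ℝ × ℝ → ℝ,
    ConvexOn ℝ Set.univ G ∧ ∀ F : Matrix (Fin 2) (Fin 2) ℝ, W F = G (F, F.det)

/-- `f : S^{2×2} → ℝ` is symmetric polyconvex if `F ↦ f (Fˢ)` is polyconvex. -/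
def SymPolyconvex2 (f : Matrix (Fin 2) (Fin 2) ℝ → ℝ) : Prop :=
  Polyconvex2 (fun F => f (symPart F))

/-!
Along a rank-one line `t ↦ E + t • D` (`det D = 0`) the determinant is affine in `t`, so
`F ↦ f Fˢ` restricted to that line is a convex function of an affine parametrisation and, by the
same argument for `-f`, also concave: it is affine. Since `(E + t • D)ˢ = Eˢ + t • Dˢ`, `f` is
affine along every direction `Dˢ`, and these include all symmetric matrices of nonpositive
determinant. Being affine along `u`, `v` and `u + v` forces the cross term of the bi-affine
function `(s, t) ↦ f (x + s • u + t • v)` to vanish, and `E₁₁`, `-E₂₂`, `E₁₂ + E₂₁` together with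
their pairwise sums all have nonpositive determinant, so `f` is affine on `S^{2×2}`.
Conversely `(F, d) ↦ B : Fˢ + b` is a linear function plus a constant, hence convex.
-/

section AffineAlong

variable {V : Type*} [AddCommGroup V] [Module ℝ V]

def AffineAlong (φ : V → ℝ) (v : V) : Prop :=
  ∀ (x : V) (t : ℝ), φ (x + t • v) = φ x + t * (φ (x + v) - φ x)

variable {φ : V → ℝ} {u v w : V}

theorem AffineAlong.add_smul_add_smul (hu : AffineAlong φ u) (hv : AffineAlong φ v)
    (huv : AffineAlong φ (u + v)) (x : V) (s t : ℝ) :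
    φ (x + s • u + t • v) = φ x + s * (φ (x + u) - φ x) + t * (φ (x + v) - φ x) := by
  have bilinear : ∀ s t : ℝ, φ (x + s • u + t • v) = φ x + s * (φ (x + u) - φ x)
      + t * (φ (x + v) - φ x) + s * t * (φ (x + u + v) - φ (x + u) - φ (x + v) + φ x) := by
    intro s t
    rw [hv, hu, add_right_comm x (s • u) v, hu (x + v), add_right_comm x v u]
    ring
  -- evaluating at `x + 2 • (u + v)` along the diagonal and via `bilinear` kills the cross term
  have cross : φ (x + u + v) = φ (x + u) + φ (x + v) - φ x := by
    have h := huv x 2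
    rw [smul_add, ← add_assoc, bilinear, ← add_assoc] at h
    linarith
  rw [bilinear, cross]
  ring

theorem AffineAlong.add_smul_add_smul_add_smul (hu : AffineAlong φ u) (hv : AffineAlong φ v)
    (hw : AffineAlong φ w) (huv : AffineAlong φ (u + v)) (huw : AffineAlong φ (u + w))
    (hvw : AffineAlong φ (v + w)) (x : V) (s t r : ℝ) :
    φ (x + s • u + t • v + r • w) = φ x + s * (φ (x + u) - φ x) + t * (φ (x + v) - φ x)
      + r * (φ (x + w) - φ x) := by
  have hxu := hu.add_smul_add_smul hw huw x 1 r
  have hxv := hv.add_smul_add_smul hw hvw x 1 r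
  rw [one_smul] at hxu hxv
  rw [show x + s • u + t • v + r • w = x + r • w + s • u + t • v by abel,
    hu.add_smul_add_smul hv huv, add_right_comm _ _ u, add_right_comm _ _ v, hxu, hxv, hw]
  ring

end AffineAlong

theorem ConvexOn.eq_affine_of_concaveOn {h : ℝ → ℝ} (hcv : ConvexOn ℝ Set.univ h)
    (hcc : ConcaveOn ℝ Set.univ h) (t : ℝ) : h t = h 0 + t * (h 1 - h 0) := by
  have comb : ∀ a b θ : ℝ, 0 ≤ θ → θ ≤ 1 →
      h ((1 - θ) * a + θ * b) = (1 - θ) * h a + θ * h b := fun a b θ h0 h1 =>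
    le_antisymm (hcv.2 trivial trivial (by linarith) h0 (by ring))
      (hcc.2 trivial trivial (by linarith) h0 (by ring))
  rcases le_or_gt 0 t with h0 | h0
  · rcases le_or_gt t 1 with h1 | h1
    · have h := comb 0 1 t h0 h1
      rw [mul_zero, zero_add, mul_one] at h
      linear_combination h
    · -- `1` lies between `0` and `t`
      have h := comb 0 t t⁻¹ (by positivity) (inv_le_one_of_one_le₀ h1.le)
      rw [mul_zero, zero_add, inv_mul_cancel₀ (by positivity)] at h
      field_simp at h
      linear_combination -h
  · -- `0` lies between `1` and `t`
    have ht : 0 < 1 - t := by linarith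
    have h := comb 1 t (1 - t)⁻¹ (by positivity) (inv_le_one_of_one_le₀ (by linarith))
    rw [show (1 - (1 - t)⁻¹) * 1 + (1 - t)⁻¹ * t = 0 by field_simp; ring] at h
    field_simp at h
    linear_combination -h

theorem det_add_smul_of_det_eq_zero {E D : Matrix (Fin 2) (Fin 2) ℝ} (hD : D.det = 0) (s : ℝ) :
    (E + s • D).det = E.det + s * ((E + D).det - E.det) := by
  simp only [det_fin_two, Matrix.add_apply, Matrix.smul_apply, smul_eq_mul] at hD ⊢
  linear_combination (s ^ 2 - s) * hD

theorem Polyconvex2.affineAlong {W : Matrix (Fin 2) (Fin 2) ℝ → ℝ} (hW : Polyconvex2 W)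
    (hW' : Polyconvex2 (fun F => -W F)) {D : Matrix (Fin 2) (Fin 2) ℝ} (hD : D.det = 0) :
    AffineAlong W D := by
  obtain ⟨G, hG, hWG⟩ := hW
  obtain ⟨H, hH, hWH⟩ := hW'
  intro E t
  let ι : ℝ →ᵃ[ℝ] Matrix (Fin 2) (Fin 2) ℝ × ℝ :=
    AffineMap.lineMap (E, E.det) (E + D, (E + D).det)
  have hι : ∀ s, ι s = (E + s • D, (E + s • D).det) := fun s => by
    rw [AffineMap.lineMap_apply_module', det_add_smul_of_det_eq_zero hD]
    ext <;> simp [add_comm]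
  have hG_line : (fun s : ℝ => W (E + s • D)) = G ∘ ι := funext fun s => by simp [hι, hWG]
  have hH_line : (fun s : ℝ => W (E + s • D)) = -(H ∘ ι) := funext fun s => by
    simp [hι, ← hWH]
  have hcv : ConvexOn ℝ Set.univ (fun s : ℝ => W (E + s • D)) := by
    rw [hG_line, ← Set.preimage_univ (f := ι)]
    exact hG.comp_affineMap ι
  have hcc : ConcaveOn ℝ Set.univ (fun s : ℝ => W (E + s • D)) := by
    rw [hH_line, ← Set.preimage_univ (f := ι)]
    exact (hH.comp_affineMap ι).neg
  simpa using hcv.eq_affine_of_concaveOn hcc t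

theorem symPart_add_smul_symPart (E D : Matrix (Fin 2) (Fin 2) ℝ) (t : ℝ) :
    symPart (E + t • symPart D) = symPart (E + t • D) := by
  simp only [symPart, transpose_add, transpose_smul, transpose_transpose]
  module

theorem AffineAlong.comp_symPart {f : Matrix (Fin 2) (Fin 2) ℝ → ℝ} {D : Matrix (Fin 2) (Fin 2) ℝ}
    (h : AffineAlong (f ∘ symPart) D) : AffineAlong (f ∘ symPart) (symPart D) := fun E t => by
  have h1 := symPart_add_smul_symPart E D 1
  rw [one_smul, one_smul] at h1
  simpa only [Function.comp_apply, symPart_add_smul_symPart, h1] using h E t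

theorem exists_det_eq_zero_symPart_eq {p q r : ℝ} (h : p * r ≤ q ^ 2) :
    ∃ D : Matrix (Fin 2) (Fin 2) ℝ, D.det = 0 ∧ symPart D = !![p, q; q, r] := by
  set w := √(q ^ 2 - p * r)
  have hw : w ^ 2 = q ^ 2 - p * r := Real.sq_sqrt (by linarith)
  refine ⟨!![p, q + w; q - w, r], ?_, ?_⟩
  · rw [det_fin_two_of]
    linear_combination hw
  · ext i j
    fin_cases i <;> fin_cases j <;> simp [symPart] <;> ring

theorem SymPolyconvex2.affineAlong {f : Matrix (Fin 2) (Fin 2) ℝ → ℝ} (hf : SymPolyconvex2 f)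
    (hf' : SymPolyconvex2 (fun ε => -f ε)) {p q r : ℝ} (h : p * r ≤ q ^ 2) :
    AffineAlong (f ∘ symPart) !![p, q; q, r] := by
  obtain ⟨D, hD, hDS⟩ := exists_det_eq_zero_symPart_eq h
  exact hDS ▸ (Polyconvex2.affineAlong hf hf' hD).comp_symPart

theorem symPart_isSymm (F : Matrix (Fin 2) (Fin 2) ℝ) : (symPart F).IsSymm := by
  rw [IsSymm, symPart, transpose_smul, transpose_add, transpose_transpose, add_comm]

theorem symPart_of_isSymm {ε : Matrix (Fin 2) (Fin 2) ℝ} (hε : ε.IsSymm) : symPart ε = ε := by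
  rw [symPart, hε.eq]
  module

theorem mdot2_neg_left (A B : Matrix (Fin 2) (Fin 2) ℝ) : mdot2 (-A) B = -mdot2 A B := by
  simp only [mdot2, Matrix.neg_apply, neg_mul, Finset.sum_neg_distrib]

theorem symPolyconvex2_of_eq_mdot2_add {f : Matrix (Fin 2) (Fin 2) ℝ → ℝ}
    (B : Matrix (Fin 2) (Fin 2) ℝ) (b : ℝ) (hf : ∀ ε, ε.IsSymm → f ε = mdot2 B ε + b) :
    SymPolyconvex2 f := by
  let ℓ : Matrix (Fin 2) (Fin 2) ℝ →ₗ[ℝ] ℝ :=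
    { toFun := fun F => mdot2 B (symPart F)
      map_add' := fun F F' => by
        simp only [mdot2, symPart, transpose_add, Fin.sum_univ_two, Matrix.smul_apply,
          Matrix.add_apply, smul_eq_mul]
        ring
      map_smul' := fun c F => by
        simp only [mdot2, symPart, transpose_smul, Fin.sum_univ_two, Matrix.smul_apply,
          Matrix.add_apply, smul_eq_mul, RingHom.id_apply]
        ring }
  exact ⟨fun p => ℓ p.1 + b, ((ℓ.comp (LinearMap.fst ℝ _ ℝ)).convexOn convex_univ).add_const b,
    fun F => hf _ (symPart_isSymm F)⟩

theorem SymPolyconvex2.comp_symPart_smul_add_smul_add_smul {f : Matrix (Fin 2) (Fin 2) ℝ → ℝ}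
    (hf : SymPolyconvex2 f) (hf' : SymPolyconvex2 (fun ε => -f ε)) (s t r : ℝ) :
    (f ∘ symPart) (s • !![1, 0; 0, 0] + t • !![0, 0; 0, -1] + r • !![0, 1; 1, 0]) =
      (f ∘ symPart) 0 + s * ((f ∘ symPart) !![1, 0; 0, 0] - (f ∘ symPart) 0)
        + t * ((f ∘ symPart) !![0, 0; 0, -1] - (f ∘ symPart) 0)
        + r * ((f ∘ symPart) !![0, 1; 1, 0] - (f ∘ symPart) 0) := by
  simpa only [zero_add] using AffineAlong.add_smul_add_smul_add_smul
    (hf.affineAlong hf' (p := 1) (q := 0) (r := 0) (by norm_num))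
    (hf.affineAlong hf' (p := 0) (q := 0) (r := -1) (by norm_num))
    (hf.affineAlong hf' (p := 0) (q := 1) (r := 0) (by norm_num))
    (by simpa using hf.affineAlong hf' (p := 1) (q := 0) (r := -1) (by norm_num))
    (by simpa using hf.affineAlong hf' (p := 1) (q := 1) (r := 0) (by norm_num))
    (by simpa using hf.affineAlong hf' (p := 0) (q := 1) (r := -1) (by norm_num)) 0 s t r

theorem SymPolyconvex2.exists_isSymm_eq_mdot2_add {f : Matrix (Fin 2) (Fin 2) ℝ → ℝ}
    (hf : SymPolyconvex2 f) (hf' : SymPolyconvex2 (fun ε => -f ε)) :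
    ∃ (B : Matrix (Fin 2) (Fin 2) ℝ) (b : ℝ), B.IsSymm ∧
      ∀ ε : Matrix (Fin 2) (Fin 2) ℝ, ε.IsSymm → f ε = mdot2 B ε + b := by
  have key := hf.comp_symPart_smul_add_smul_add_smul hf'
  set g := f ∘ symPart with hg
  refine ⟨!![g !![1, 0; 0, 0] - g 0, (g !![0, 1; 1, 0] - g 0) / 2;
    (g !![0, 1; 1, 0] - g 0) / 2, g 0 - g !![0, 0; 0, -1]], g 0, ?_, fun ε hε => ?_⟩
  · ext i j
    fin_cases i <;> fin_cases j <;> rfl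
  have hε10 : ε 1 0 = ε 0 1 := hε.apply 0 1
  have hdecomp :
      ε = ε 0 0 • !![1, 0; 0, 0] + (-ε 1 1) • !![0, 0; 0, -1] + ε 0 1 • !![0, 1; 1, 0] := by
    ext i j
    fin_cases i <;> fin_cases j <;> simp [hε10]
  have hfg : f ε = g ε := by rw [hg, Function.comp_apply, symPart_of_isSymm hε]
  rw [hfg]
  nth_rw 1 [hdecomp]
  rw [key]
  simp only [mdot2, Fin.sum_univ_two, of_apply, cons_val', cons_val_zero, cons_val_one,
    empty_val', cons_val_fin_one, hε10]
  ring

/-- A function on `S^{2×2}` is symmetric polyaffine iff it is affine. -/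
theorem symmetric_polyaffine_iff_affine_2d (f : Matrix (Fin 2) (Fin 2) ℝ → ℝ) :
    (SymPolyconvex2 f ∧ SymPolyconvex2 (fun ε => -f ε)) ↔
      ∃ (B : Matrix (Fin 2) (Fin 2) ℝ) (b : ℝ), B.IsSymm ∧
        ∀ ε : Matrix (Fin 2) (Fin 2) ℝ, ε.IsSymm → f ε = mdot2 B ε + b := by
  refine ⟨fun ⟨hf, hf'⟩ => hf.exists_isSymm_eq_mdot2_add hf', ?_⟩
  rintro ⟨B, b, -, hB⟩
  refine ⟨symPolyconvex2_of_eq_mdot2_add B b hB, symPolyconvex2_of_eq_mdot2_add (-B) (-b) ?_⟩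
  intro ε hε
  rw [hB ε hε, mdot2_neg_left]
  ring
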